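/- Let c ∈ R be left cancellative and π : R → R/cR the canonical epimorphism. Then π induces an isomorphism of partially ordered sets between the set L(cR, R) of principal right ideals aR with a left cancellative and cR ⊆ aR ⊆ R, and the set of π-exact submodules of R/cR, both ordered by inclusion. -/

import Mathlib

/-!
By the correspondence theorem, `π` and `π⁻¹` are mutually inverse, inclusion-preserving
bijections between the right ideals containing `cR` and the submodules of `R/cR`. It remains to
match the side conditions: a right ideal `I` satisfies `I ≅ R_R` exactly when `I = aR` with `a`
left cancellative, since an isomorphism `R_R → I` is left multiplication by its value `a` at `1`.
-/

open Submodule LinearMap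

section RightIdeal

variable {R : Type*} [Ring R]

theorem range_mulLeft_op (a : R) : range (mulLeft Rᵐᵒᵖ a) = span Rᵐᵒᵖ {a} := by
  ext x
  simp only [mem_range, mulLeft_apply, mem_span_singleton, MulOpposite.smul_eq_mul_unop]
  exact ⟨fun ⟨y, hy⟩ => ⟨.op y, hy⟩, fun ⟨r, hr⟩ => ⟨r.unop, hr⟩⟩

noncomputable def linearEquivSpanOfIsLeftRegular {a : R} (ha : IsLeftRegular a) :
    R ≃ₗ[Rᵐᵒᵖ] span Rᵐᵒᵖ {a} :=
  (LinearEquiv.ofInjective _ ha).trans (LinearEquiv.ofEq _ _ (range_mulLeft_op a))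

variable {I : Submodule Rᵐᵒᵖ R}

theorem coe_linearEquiv_symm_apply (e : I ≃ₗ[Rᵐᵒᵖ] R) (b : R) :
    (e.symm b : R) = e.symm 1 * b := by
  conv_lhs => rw [← one_mul b, ← op_smul_eq_mul, map_smul]
  rfl

theorem isLeftRegular_linearEquiv_symm_one (e : I ≃ₗ[Rᵐᵒᵖ] R) :
    IsLeftRegular (e.symm 1 : R) := fun b b' h =>
  e.symm.injective <| Subtype.ext <| by
    rw [coe_linearEquiv_symm_apply e b, coe_linearEquiv_symm_apply e b']; exact h

theorem eq_span_linearEquiv_symm_one (e : I ≃ₗ[Rᵐᵒᵖ] R) :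
    I = span Rᵐᵒᵖ {(e.symm 1 : R)} := by
  refine le_antisymm (fun x hx => mem_span_singleton.2 ⟨.op (e ⟨x, hx⟩), ?_⟩) ?_
  · rw [op_smul_eq_mul, ← coe_linearEquiv_symm_apply, e.symm_apply_apply]
  · exact span_le.2 (Set.singleton_subset_iff.2 (e.symm 1).2)

theorem nonempty_linearEquiv_iff_exists_isLeftRegular [Nontrivial R] :
    Nonempty (I ≃ₗ[Rᵐᵒᵖ] R) ↔
      ∃ a : R, (a ≠ 0 ∧ IsLeftRegular a) ∧ I = span Rᵐᵒᵖ {a} := by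
  constructor
  · rintro ⟨e⟩
    have hreg := isLeftRegular_linearEquiv_symm_one e
    exact ⟨_, ⟨hreg.ne_zero, hreg⟩, eq_span_linearEquiv_symm_one e⟩
  · rintro ⟨a, ⟨-, ha⟩, rfl⟩
    exact ⟨(linearEquivSpanOfIsLeftRegular ha).symm⟩

end RightIdeal

theorem stmt_9 {R : Type*} [Ring R] (c : R)
    (hc : c ≠ 0 ∧ ∀ b b' : R, c * b = c * b' → b = b') :
    ∃ φ : {I : Submodule Rᵐᵒᵖ R //
            (∃ a : R, (a ≠ 0 ∧ ∀ b b' : R, a * b = a * b' → b = b') ∧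
              I = Submodule.span Rᵐᵒᵖ {a}) ∧ Submodule.span Rᵐᵒᵖ {c} ≤ I} ≃o
         {N : Submodule Rᵐᵒᵖ (R ⧸ Submodule.span Rᵐᵒᵖ {c}) //
            Nonempty (↥(Submodule.comap (Submodule.span Rᵐᵒᵖ {c}).mkQ N) ≃ₗ[Rᵐᵒᵖ] R)},
      ∀ I, (φ I : Submodule Rᵐᵒᵖ (R ⧸ Submodule.span Rᵐᵒᵖ {c})) =
            Submodule.map (Submodule.span Rᵐᵒᵖ {c}).mkQ (I : Submodule Rᵐᵒᵖ R) := by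
  have : Nontrivial R := ⟨⟨c, 0, hc.1⟩⟩
  set p := span Rᵐᵒᵖ {c}
  have comap_map : ∀ I : Submodule Rᵐᵒᵖ R, p ≤ I → comap p.mkQ (map p.mkQ I) = I :=
    fun I hI => by rw [comap_map_mkQ, sup_eq_right.2 hI]
  refine ⟨{ toFun I := ⟨map p.mkQ I, ?_⟩
            invFun N := ⟨comap p.mkQ N, nonempty_linearEquiv_iff_exists_isLeftRegular.1 N.2,
              le_comap_mkQ p _⟩
            left_inv I := Subtype.ext (comap_map I I.2.2)
            right_inv N := Subtype.ext (map_comap_eq_of_surjective p.mkQ_surjective N)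
            map_rel_iff' {I J} := (comapMkQRelIso p).symm.le_iff_le (x := ⟨I, I.2.2⟩)
              (y := ⟨J, J.2.2⟩) }, fun I => rfl⟩
  rw [comap_map I I.2.2]
  exact nonempty_linearEquiv_iff_exists_isLeftRegular.2 I.2.1
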